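/- arXiv:2510.16959 — 9 statements merged into one kernel-verified Lean document; each statement's English description precedes it below -/
import Mathlib

section
/- Let r and s be positive integers and let y be a positive integer. If v is sampled uniformly at random from {1, 2, ..., s}, then the probability that ⌊y + rv − r⌋_{rs} ≠ ⌊y + rv + r⌋_{rs} is at most 2/s. Equivalently, there are at most 2 values of v in {1, ..., s} for which ⌊y + rv − r⌋_{rs} ≠ ⌊y + rv + r⌋_{rs}. -/
open scoped ENNReal

/-- `rdown k z` rounds the integer `z` down to the nearest multiple of `k`. -/
def rdown (k : ℕ) (z : ℤ) : ℤ := z - z % (k : ℤ)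

lemma rdown_eq (k : ℕ) (z : ℤ) : rdown k z = (k : ℤ) * (z / k) := by
  rw [rdown, Int.emod_def]; ring

lemma bad_iff (k : ℤ) (hk : 0 < k) (a c : ℤ) (hc : 0 ≤ c) :
    a / k ≠ (a + c) / k ↔ k ≤ a % k + c := by
  have h1 : a + c = a % k + c + k * (a / k) := by rw [Int.emod_def]; ring
  have h2 : (a + c) / k = (a % k + c) / k + a / k := by
    rw [h1, Int.add_mul_ediv_left _ _ (ne_of_gt hk)]
  have hm0 : 0 ≤ a % k := Int.emod_nonneg a (ne_of_gt hk)
  have hm1 : a % k < k := Int.emod_lt_of_pos a hk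
  constructor
  · intro h
    by_contra hlt
    push_neg at hlt
    have : (a % k + c) / k = 0 := Int.ediv_eq_zero_of_lt (by omega) hlt
    omega
  · intro h hne
    have : 1 ≤ (a % k + c) / k := by
      rw [Int.le_ediv_iff_mul_le hk]; omega
    omega

lemma card_bad_le (r s : ℕ) (hr : 0 < r) (hs : 0 < s) (y : ℤ) :
    ((Finset.Icc 1 s).filter (fun v : ℕ =>
        rdown (r * s) (y + (r : ℤ) * (v : ℤ) - (r : ℤ)) ≠
          rdown (r * s) (y + (r : ℤ) * (v : ℤ) + (r : ℤ)))).card ≤ 2 := by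
  set k : ℤ := (r : ℤ) * (s : ℤ) with hkdef
  have hk : 0 < k := by positivity
  set w : ℕ → ℤ := fun v => (y + (r : ℤ) * v - r) % k with hwdef
  have hbad : ∀ v : ℕ, (rdown (r * s) (y + (r : ℤ) * v - r) ≠
      rdown (r * s) (y + (r : ℤ) * v + r)) ↔ k ≤ w v + 2 * r := by
    intro v
    have hcast : ((r * s : ℕ) : ℤ) = k := by push_cast [hkdef]; ring
    have h2 : y + (r : ℤ) * v + r = (y + (r : ℤ) * v - r) + 2 * r := by ring
    rw [rdown_eq, rdown_eq, hcast, h2, Ne, mul_right_inj' hk.ne']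
    exact bad_iff k hk _ (2 * r) (by positivity)
  have hw0 : ∀ v, 0 ≤ w v := fun v => Int.emod_nonneg _ hk.ne'
  have hw1 : ∀ v, w v < k := fun v => Int.emod_lt_of_pos _ hk
  have hwmod : ∀ v : ℕ, w v % r = (y - r) % r := by
    intro v
    have hdvd : (r : ℤ) ∣ k := Dvd.intro _ rfl
    rw [hwdef]
    simp only
    rw [Int.emod_emod_of_dvd _ hdvd]
    have : y + (r : ℤ) * v - r = (y - r) + (r : ℤ) * v := by ring
    rw [this, Int.add_mul_emod_self_left]
  have hinj : ∀ v1 v2 : ℕ, v1 ∈ Finset.Icc 1 s → v2 ∈ Finset.Icc 1 s →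
      w v1 = w v2 → v1 = v2 := by
    intro v1 v2 h1 h2 heq
    have hmod : Int.ModEq k (y + (r : ℤ) * v1 - r) (y + (r : ℤ) * v2 - r) := heq
    have hdvd : k ∣ (r : ℤ) * ((v2 : ℤ) - v1) := by
      have := hmod.dvd
      have he : (y + (r : ℤ) * v2 - r) - (y + (r : ℤ) * v1 - r) = (r : ℤ) * ((v2 : ℤ) - v1) := by
        ring
      rwa [he] at this
    have hdvds : (s : ℤ) ∣ ((v2 : ℤ) - v1) := by
      rw [hkdef] at hdvd
      exact (mul_dvd_mul_iff_left (by exact_mod_cast hr.ne' : (r : ℤ) ≠ 0)).mp hdvd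
    simp only [Finset.mem_Icc] at h1 h2
    rcases eq_or_ne ((v2 : ℤ) - v1) 0 with h0 | h0
    · omega
    · have := Int.le_of_dvd (abs_pos.mpr h0) ((dvd_abs _ _).mpr hdvds)
      rcases abs_cases ((v2 : ℤ) - (v1 : ℤ)) with ⟨he, _⟩ | ⟨he, _⟩ <;> omega
  have hsep : ∀ v1 v2 : ℕ, v1 ∈ Finset.Icc 1 s → v2 ∈ Finset.Icc 1 s → v1 ≠ v2 →
      (r : ℤ) ≤ w v1 - w v2 ∨ (r : ℤ) ≤ w v2 - w v1 := by
    intro v1 v2 h1 h2 hne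
    have hne' : w v1 - w v2 ≠ 0 := fun h => hne (hinj v1 v2 h1 h2 (by omega))
    have hdvd : (r : ℤ) ∣ w v1 - w v2 := by
      have : Int.ModEq r (w v2) (w v1) := ((hwmod v2).trans (hwmod v1).symm)
      exact this.dvd
    have hle : (r : ℤ) ≤ |w v1 - w v2| :=
      Int.le_of_dvd (abs_pos.mpr hne') ((dvd_abs _ _).mpr hdvd)
    rcases abs_cases (w v1 - w v2) with ⟨he, _⟩ | ⟨he, _⟩ <;> omega
  by_contra hcard
  push_neg at hcard
  obtain ⟨a, b, c, ha, hb, hc, hab, hac, hbc⟩ := Finset.two_lt_card_iff.mp hcard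
  simp only [Finset.mem_filter] at ha hb hc
  have hba := (hbad a).mp ha.2
  have hbb := (hbad b).mp hb.2
  have hbc' := (hbad c).mp hc.2
  have s1 := hsep a b ha.1 hb.1 hab
  have s2 := hsep a c ha.1 hc.1 hac
  have s3 := hsep b c hb.1 hc.1 hbc
  have w0a := hw0 a; have w0b := hw0 b; have w0c := hw0 c
  have w1a := hw1 a; have w1b := hw1 b; have w1c := hw1 c
  clear_value k w
  omega

/-- If `v` is sampled uniformly from `{1, …, s}`, the probability that
`⌊y + rv − r⌋_{rs} ≠ ⌊y + rv + r⌋_{rs}` is at most `2/s`; equivalently,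
there are at most `2` such values of `v` in `{1, …, s}`. -/
theorem stmt0 (r s : ℕ) (hr : 0 < r) (hs : 0 < s) (y : ℤ) (hy : 0 < y) :
    ((Finset.Icc 1 s).filter (fun v : ℕ =>
        rdown (r * s) (y + (r : ℤ) * (v : ℤ) - (r : ℤ)) ≠
          rdown (r * s) (y + (r : ℤ) * (v : ℤ) + (r : ℤ)))).card ≤ 2 ∧
    (PMF.uniformOfFinset (Finset.Icc 1 s) (Finset.nonempty_Icc.mpr hs)).toOuterMeasure
        {v : ℕ | rdown (r * s) (y + (r : ℤ) * (v : ℤ) - (r : ℤ)) ≠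
          rdown (r * s) (y + (r : ℤ) * (v : ℤ) + (r : ℤ))} ≤
      ENNReal.ofReal (2 / (s : ℝ)) := by
  have hcard := card_bad_le r s hr hs y
  refine ⟨hcard, ?_⟩
  rw [PMF.toOuterMeasure_uniformOfFinset_apply]
  simp only [Set.mem_setOf_eq]
  have h1 : (Finset.Icc 1 s).card = s := by
    rw [Nat.card_Icc]; omega
  rw [h1]
  have h2 : ENNReal.ofReal (2 / (s : ℝ)) = 2 / (s : ℝ≥0∞) := by
    rw [ENNReal.ofReal_div_of_pos (by exact_mod_cast hs)]
    simp [ENNReal.ofReal_ofNat, ENNReal.ofReal_natCast]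
  rw [h2]
  gcongr
  exact_mod_cast hcard
end

section
/- Let M and M' be mechanisms assigning to each database x a probability distribution on a common output space, and suppose that for every database x the statistical distance between M(x) and M'(x) is at most γ. If M is (ε, δ)-differentially private with respect to an adjacency relation on databases, then M' is (ε, (e^ε + 1)·γ + δ)-differentially private with respect to the same adjacency relation. -/
open scoped ENNReal

/-- Insert-delete adjacency on databases: `x'` is obtained from `x` by inserting or
deleting exactly one entry. -/
def Adjacent {α : Type*} (x x' : List α) : Prop :=
  (∃ a l₁ l₂, x = l₁ ++ l₂ ∧ x' = l₁ ++ a :: l₂) ∨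
  (∃ a l₁ l₂, x' = l₁ ++ l₂ ∧ x = l₁ ++ a :: l₂)

/-- The coordinatewise sum of the entries of a database `x ∈ ({0,1}^d)^*`. -/
def dbSum {d : ℕ} (x : List (Fin d → Bool)) (i : Fin d) : ℤ :=
  (x.map fun row => if row i then (1 : ℤ) else 0).sum

/-- `(ε, δ)`-differential privacy of a mechanism `M` with respect to an adjacency
relation `Adj`. -/
def IsDP {X : Type*} {Y : Type*} (Adj : X → X → Prop) (M : X → PMF Y) (ε δ : ℝ) : Prop :=
  ∀ x x', Adj x x' → ∀ S : Set Y,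
    (M x).toOuterMeasure S ≤
      ENNReal.ofReal (Real.exp ε) * (M x').toOuterMeasure S + ENNReal.ofReal δ

theorem ENNReal.le_mul_add_of_le_add_of_le_add {a a' b b' c d g : ℝ≥0∞}
    (ha : a' ≤ a + g) (hab : a ≤ c * b + d) (hb : b ≤ b' + g) :
    a' ≤ c * b' + ((c + 1) * g + d) :=
  calc a' ≤ c * b + d + g := ha.trans (add_le_add_left hab g)
    _ ≤ c * (b' + g) + d + g := by gcongr
    _ = c * b' + ((c + 1) * g + d) := by ring

theorem ENNReal.ofReal_add_one_mul_add {c γ δ : ℝ} (hc : 0 ≤ c) (hγ : 0 ≤ γ) (hδ : 0 ≤ δ) :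
    ENNReal.ofReal ((c + 1) * γ + δ) =
      (ENNReal.ofReal c + 1) * ENNReal.ofReal γ + ENNReal.ofReal δ := by
  rw [ENNReal.ofReal_add (by positivity) hδ, ENNReal.ofReal_mul (by positivity),
    ENNReal.ofReal_add hc zero_le_one, ENNReal.ofReal_one]

/-- If the statistical distance between `M x` and `M' x` is at most `γ` for every
database `x`, and `M` is `(ε, δ)`-DP, then `M'` is `(ε, (e^ε + 1)γ + δ)`-DP. -/
theorem stmt1 {X : Type*} {Y : Type*} (Adj : X → X → Prop) (M M' : X → PMF Y)
    (ε δ γ : ℝ) (hγ : 0 ≤ γ) (hδ : 0 ≤ δ)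
    (hdist : ∀ x (S : Set Y),
        (M x).toOuterMeasure S ≤ (M' x).toOuterMeasure S + ENNReal.ofReal γ ∧
        (M' x).toOuterMeasure S ≤ (M x).toOuterMeasure S + ENNReal.ofReal γ)
    (hM : IsDP Adj M ε δ) :
    IsDP Adj M' ε ((Real.exp ε + 1) * γ + δ) := by
  intro x x' hadj S
  rw [ENNReal.ofReal_add_one_mul_add (Real.exp_nonneg ε) hγ hδ]
  exact ENNReal.le_mul_add_of_le_add_of_le_add (hdist x S).2 (hM x x' hadj S) (hdist x' S).1
end

section
/- Let d ≥ 1 be an integer, ε > 0, and δ ∈ (0, e^{−ε/2}]. Set σ² = 4d·ln(1/δ)/ε². The mechanism M : ({0,1}^d)^* → ℤ^d defined by M(x) = sum(x) + Y, where Y ∈ ℤ^d has coordinates independently distributed as the discrete Gaussian N_ℤ(σ²), is (ε, δ)-differentially private with respect to insert-delete adjacency. -/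
open scoped ENNReal

/-!
The privacy loss of an output `y` is `ℓ y = log (P y / Q y)`, where `P` and `Q` are the output
distributions on adjacent databases. Outputs with `ℓ ≤ ε` satisfy `P ≤ e^ε Q`, and by Chernoff's
bound the remaining ones carry `P`-mass at most `e^{-λε} E_P[e^{λℓ}]` for every `λ ≥ 0`. For
shifted discrete Gaussians the loss is a sum of independent coordinate losses with
`E[e^{λℓᵢ}] ≤ exp ((λ + λ²) vᵢ² / (2σ²))`, `vᵢ ∈ {-1, 0, 1}` being the shift, because the moment
generating function of `N_ℤ(σ²)` is at most `e^{β²σ²/2}`. That reduces to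
`∑ₙ exp (-t (n - c)²) ≤ ∑ₙ exp (-t n²)`, which holds because by Poisson summation the left side
is a Fourier series in `c` with positive coefficients. Taking `λ = 2 log (1/δ) / ε` makes the
Chernoff term at most `δ`.
-/

open Real Finset

section Theta

open HurwitzZeta

lemma HurwitzZeta.cosKernel_le_cosKernel_zero (a : ℝ) {x : ℝ} (hx : 0 < x) :
    cosKernel a x ≤ cosKernel 0 x := by
  have h0 : HasSum (fun n : ℤ ↦ rexp (-π * n ^ 2 * x)) (cosKernel 0 x) := by
    simpa [evenKernel_eq_cosKernel_of_zero] using hasSum_int_evenKernel 0 hx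
  refine (le_abs_self _).trans ?_
  simpa using (hasSum_int_cosKernel a hx).norm_le_of_bounded h0 fun n ↦ by
    simp [Complex.norm_exp, ← Complex.ofReal_intCast, -Complex.ofReal_pow]

lemma HurwitzZeta.evenKernel_le_evenKernel_zero (a : ℝ) {x : ℝ} (hx : 0 < x) :
    evenKernel a x ≤ evenKernel 0 x := by
  rw [evenKernel_functional_equation, evenKernel_functional_equation]
  gcongr
  exact cosKernel_le_cosKernel_zero a (one_div_pos.mpr hx)

lemma hasSum_exp_neg_add_sq_div {s : ℝ} (hs : 0 < s) (a : ℝ) :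
    HasSum (fun n : ℤ ↦ rexp (-((n : ℝ) + a) ^ 2 / (2 * s))) (evenKernel a (1 / (2 * π * s))) := by
  convert hasSum_int_evenKernel a (by positivity : 0 < 1 / (2 * π * s)) using 3
  field_simp

lemma summable_exp_neg_sub_sq_div {s : ℝ} (hs : 0 < s) (c : ℝ) :
    Summable fun n : ℤ ↦ rexp (-((n : ℝ) - c) ^ 2 / (2 * s)) := by
  simpa [sub_eq_add_neg] using (hasSum_exp_neg_add_sq_div hs (-c)).summable

lemma tsum_exp_neg_sub_sq_div_le {s : ℝ} (hs : 0 < s) (c : ℝ) :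
    ∑' n : ℤ, rexp (-((n : ℝ) - c) ^ 2 / (2 * s)) ≤ ∑' n : ℤ, rexp (-(n : ℝ) ^ 2 / (2 * s)) := by
  calc ∑' n : ℤ, rexp (-((n : ℝ) - c) ^ 2 / (2 * s))
      = evenKernel (-c : ℝ) (1 / (2 * π * s)) := by
        simpa [sub_eq_add_neg] using (hasSum_exp_neg_add_sq_div hs (-c)).tsum_eq
    _ ≤ evenKernel (0 : ℝ) (1 / (2 * π * s)) :=
        evenKernel_le_evenKernel_zero (-c) (by positivity)
    _ = ∑' n : ℤ, rexp (-(n : ℝ) ^ 2 / (2 * s)) := by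
        simpa using (hasSum_exp_neg_add_sq_div hs 0).tsum_eq.symm

end Theta

noncomputable def discreteGaussian (s : ℝ) (n : ℤ) : ℝ :=
  rexp (-(n : ℝ) ^ 2 / (2 * s)) / ∑' m : ℤ, rexp (-(m : ℝ) ^ 2 / (2 * s))

lemma discreteGaussian_nonneg (s : ℝ) (n : ℤ) : 0 ≤ discreteGaussian s n := by
  unfold discreteGaussian
  positivity

lemma exp_mul_discreteGaussian {s : ℝ} (hs : 0 < s) (β : ℝ) (n : ℤ) :
    rexp (β * n) * discreteGaussian s n =
      rexp (β ^ 2 * s / 2) * (rexp (-((n : ℝ) - β * s) ^ 2 / (2 * s)) /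
        ∑' m : ℤ, rexp (-(m : ℝ) ^ 2 / (2 * s))) := by
  rw [discreteGaussian, ← mul_div_assoc, ← mul_div_assoc, ← exp_add, ← exp_add]
  congr 2
  field_simp
  ring

lemma summable_exp_mul_discreteGaussian {s : ℝ} (hs : 0 < s) (β : ℝ) :
    Summable fun n : ℤ ↦ rexp (β * n) * discreteGaussian s n := by
  simpa only [exp_mul_discreteGaussian hs] using
    ((summable_exp_neg_sub_sq_div hs (β * s)).div_const _).mul_left (rexp (β ^ 2 * s / 2))

lemma tsum_exp_mul_discreteGaussian_le {s : ℝ} (hs : 0 < s) (β : ℝ) :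
    ∑' n : ℤ, rexp (β * n) * discreteGaussian s n ≤ rexp (β ^ 2 * s / 2) := by
  have hZ : 0 < ∑' m : ℤ, rexp (-(m : ℝ) ^ 2 / (2 * s)) := by
    simpa using (summable_exp_neg_sub_sq_div hs 0).tsum_pos (fun m ↦ (exp_pos _).le) 0
      (exp_pos _)
  simp_rw [exp_mul_discreteGaussian hs, tsum_mul_left, tsum_div_const]
  refine mul_le_of_le_one_right (exp_pos _).le ((div_le_one hZ).mpr ?_)
  exact tsum_exp_neg_sub_sq_div_le hs (β * s)

theorem ENNReal.tsum_prod_eq_prod_tsum {n : ℕ} {α : Type*} (f : Fin n → α → ℝ≥0∞) :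
    ∑' x : Fin n → α, ∏ i, f i (x i) = ∏ i, ∑' a, f i a := by
  induction n with
  | zero => simp
  | succ n ih =>
    rw [← (Fin.consEquiv fun _ ↦ α).tsum_eq, ENNReal.tsum_prod', Fin.prod_univ_succ, ← ih,
      ← ENNReal.tsum_mul_right]
    refine tsum_congr fun a ↦ ?_
    rw [← ENNReal.tsum_mul_left]
    simp [Fin.consEquiv, Fin.prod_univ_succ]

section PrivacyLoss

variable {Y : Type*} {P Q : Y → ℝ≥0∞} {ℓ : Y → ℝ} {lam ε : ℝ}

lemma indicator_le_exp_mul_indicator_add (hPQ : ∀ y, P y ≤ ENNReal.ofReal (exp (ℓ y)) * Q y)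
    (hlam : 0 ≤ lam) (S : Set Y) (y : Y) :
    S.indicator P y ≤ ENNReal.ofReal (exp ε) * S.indicator Q y +
      ENNReal.ofReal (exp (-(lam * ε))) * (P y * ENNReal.ofReal (exp (lam * ℓ y))) := by
  by_cases hyS : y ∈ S
  swap
  · simp [hyS]
  rw [Set.indicator_of_mem hyS, Set.indicator_of_mem hyS]
  rcases le_or_gt (ℓ y) ε with hgood | hbad
  · calc P y ≤ ENNReal.ofReal (exp (ℓ y)) * Q y := hPQ y
      _ ≤ ENNReal.ofReal (exp ε) * Q y := by gcongr
      _ ≤ _ := le_self_add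
  · have hone : 1 ≤ ENNReal.ofReal (exp (-(lam * ε))) * ENNReal.ofReal (exp (lam * ℓ y)) := by
      rw [← ENNReal.ofReal_mul (exp_pos _).le, ← exp_add, ENNReal.one_le_ofReal, one_le_exp_iff]
      nlinarith
    calc P y ≤ ENNReal.ofReal (exp (-(lam * ε))) * ENNReal.ofReal (exp (lam * ℓ y)) * P y :=
          le_mul_of_one_le_left' hone
      _ = ENNReal.ofReal (exp (-(lam * ε))) * (P y * ENNReal.ofReal (exp (lam * ℓ y))) := by ring
      _ ≤ _ := le_add_self

theorem tsum_indicator_le_exp_mul_add (hPQ : ∀ y, P y ≤ ENNReal.ofReal (exp (ℓ y)) * Q y)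
    (hlam : 0 ≤ lam) (S : Set Y) :
    ∑' y, S.indicator P y ≤ ENNReal.ofReal (exp ε) * ∑' y, S.indicator Q y +
      ENNReal.ofReal (exp (-(lam * ε))) * ∑' y, P y * ENNReal.ofReal (exp (lam * ℓ y)) := by
  rw [← ENNReal.tsum_mul_left, ← ENNReal.tsum_mul_left, ← ENNReal.tsum_add]
  exact ENNReal.tsum_le_tsum (indicator_le_exp_mul_indicator_add hPQ hlam S)

end PrivacyLoss

section DiscreteGaussian

variable {s : ℝ}

lemma discreteGaussian_mul_exp_loss (hs : 0 < s) (lam v : ℝ) (k : ℤ) :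
    discreteGaussian s k * rexp (lam * ((((k : ℝ) - v) ^ 2 - (k : ℝ) ^ 2) / (2 * s))) =
      rexp (lam * v ^ 2 / (2 * s)) * (rexp (-(lam * v / s) * k) * discreteGaussian s k) := by
  rw [mul_comm, ← mul_assoc, ← exp_add]
  congr 2
  field_simp
  ring

lemma tsum_discreteGaussian_mul_exp_loss_le (hs : 0 < s) (lam v : ℝ) :
    ∑' k : ℤ, discreteGaussian s k * rexp (lam * ((((k : ℝ) - v) ^ 2 - (k : ℝ) ^ 2) / (2 * s))) ≤
      rexp ((lam + lam ^ 2) * v ^ 2 / (2 * s)) := by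
  simp_rw [discreteGaussian_mul_exp_loss hs, tsum_mul_left]
  calc rexp (lam * v ^ 2 / (2 * s)) * ∑' k : ℤ, rexp (-(lam * v / s) * k) * discreteGaussian s k
      ≤ rexp (lam * v ^ 2 / (2 * s)) * rexp ((-(lam * v / s)) ^ 2 * s / 2) := by
        gcongr
        exact tsum_exp_mul_discreteGaussian_le hs _
    _ = rexp ((lam + lam ^ 2) * v ^ 2 / (2 * s)) := by
        rw [← exp_add]
        congr 1
        field_simp

/-- The privacy loss `log (N_ℤ(s)(k - a) / N_ℤ(s)(k - b))` between two shifts of `N_ℤ(s)`. -/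
noncomputable def discreteGaussianLoss (s : ℝ) (a b k : ℤ) : ℝ :=
  (((k : ℝ) - b) ^ 2 - ((k : ℝ) - a) ^ 2) / (2 * s)

lemma discreteGaussian_sub_eq_exp_loss_mul (s : ℝ) (a b k : ℤ) :
    discreteGaussian s (k - a) =
      rexp (discreteGaussianLoss s a b k) * discreteGaussian s (k - b) := by
  rw [discreteGaussian, discreteGaussian, discreteGaussianLoss, ← mul_div_assoc, ← exp_add]
  push_cast
  ring_nf

lemma tsum_ofReal_discreteGaussian_mul_exp_loss_le (hs : 0 < s) (lam : ℝ) (a b : ℤ) :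
    ∑' k : ℤ, ENNReal.ofReal (discreteGaussian s (k - a)) *
        ENNReal.ofReal (rexp (lam * discreteGaussianLoss s a b k)) ≤
      ENNReal.ofReal (rexp ((lam + lam ^ 2) * ((b : ℝ) - a) ^ 2 / (2 * s))) := by
  have hsummable := (summable_exp_mul_discreteGaussian hs (-(lam * ((b : ℝ) - a) / s))).mul_left
    (rexp (lam * ((b : ℝ) - a) ^ 2 / (2 * s)))
  simp_rw [← discreteGaussian_mul_exp_loss hs] at hsummable
  have hterm (k : ℤ) : ENNReal.ofReal (discreteGaussian s (k + a - a)) *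
      ENNReal.ofReal (rexp (lam * discreteGaussianLoss s a b (k + a))) =
      ENNReal.ofReal (discreteGaussian s k *
        rexp (lam * ((((k : ℝ) - (b - a)) ^ 2 - (k : ℝ) ^ 2) / (2 * s)))) := by
    rw [← ENNReal.ofReal_mul (discreteGaussian_nonneg _ _), add_sub_cancel_right,
      discreteGaussianLoss]
    push_cast
    ring_nf
  rw [← (Equiv.addRight a).tsum_eq]
  simp only [Equiv.coe_addRight, hterm]
  rw [← ENNReal.ofReal_tsum_of_nonneg
    (fun k ↦ mul_nonneg (discreteGaussian_nonneg _ _) (exp_pos _).le) hsummable]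
  exact ENNReal.ofReal_le_ofReal (tsum_discreteGaussian_mul_exp_loss_le hs lam _)

end DiscreteGaussian

section GaussianMechanism

variable {d : ℕ} {s : ℝ}

lemma prod_ofReal_discreteGaussian_sub_eq (a b y : Fin d → ℤ) :
    ∏ i, ENNReal.ofReal (discreteGaussian s (y i - a i)) =
      ENNReal.ofReal (rexp (∑ i, discreteGaussianLoss s (a i) (b i) (y i))) *
        ∏ i, ENNReal.ofReal (discreteGaussian s (y i - b i)) := by
  rw [exp_sum, ENNReal.ofReal_prod_of_nonneg fun i _ ↦ (exp_pos _).le, ← prod_mul_distrib]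
  refine prod_congr rfl fun i _ ↦ ?_
  rw [discreteGaussian_sub_eq_exp_loss_mul s (a i) (b i), ENNReal.ofReal_mul (exp_pos _).le]

lemma prod_ofReal_discreteGaussian_mul_exp_loss (a b y : Fin d → ℤ) (lam : ℝ) :
    (∏ i, ENNReal.ofReal (discreteGaussian s (y i - a i))) *
        ENNReal.ofReal (rexp (lam * ∑ i, discreteGaussianLoss s (a i) (b i) (y i))) =
      ∏ i, ENNReal.ofReal (discreteGaussian s (y i - a i)) *
        ENNReal.ofReal (rexp (lam * discreteGaussianLoss s (a i) (b i) (y i))) := by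
  rw [mul_sum, exp_sum, ENNReal.ofReal_prod_of_nonneg fun i _ ↦ (exp_pos _).le,
    prod_mul_distrib]

theorem tsum_indicator_prod_discreteGaussian_le (hs : 0 < s) (a b : Fin d → ℤ) {lam : ℝ}
    (hlam : 0 ≤ lam) (ε : ℝ) (S : Set (Fin d → ℤ)) :
    ∑' y, S.indicator (fun y ↦ ∏ i, ENNReal.ofReal (discreteGaussian s (y i - a i))) y ≤
      ENNReal.ofReal (rexp ε) *
          ∑' y, S.indicator (fun y ↦ ∏ i, ENNReal.ofReal (discreteGaussian s (y i - b i))) y +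
        ENNReal.ofReal
          (rexp (-(lam * ε) + (lam + lam ^ 2) * (∑ i, ((b i : ℝ) - a i) ^ 2) / (2 * s))) := by
  refine (tsum_indicator_le_exp_mul_add
    (fun y ↦ (prod_ofReal_discreteGaussian_sub_eq a b y).le) hlam S).trans (add_le_add le_rfl ?_)
  simp_rw [prod_ofReal_discreteGaussian_mul_exp_loss]
  rw [ENNReal.tsum_prod_eq_prod_tsum fun i k ↦ ENNReal.ofReal (discreteGaussian s (k - a i)) *
    ENNReal.ofReal (rexp (lam * discreteGaussianLoss s (a i) (b i) k))]
  calc _ ≤ ENNReal.ofReal (rexp (-(lam * ε))) *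
          ∏ i, ENNReal.ofReal (rexp ((lam + lam ^ 2) * ((b i : ℝ) - a i) ^ 2 / (2 * s))) := by
        gcongr with i
        exact tsum_ofReal_discreteGaussian_mul_exp_loss_le hs lam (a i) (b i)
    _ = _ := by
        rw [← ENNReal.ofReal_prod_of_nonneg fun i _ ↦ (exp_pos _).le, ← exp_sum,
          ← ENNReal.ofReal_mul (exp_pos _).le, ← exp_add, mul_sum, sum_div]

end GaussianMechanism

lemma dbSum_append_cons {d : ℕ} (l₁ l₂ : List (Fin d → Bool)) (a : Fin d → Bool) (i : Fin d) :
    dbSum (l₁ ++ a :: l₂) i = dbSum (l₁ ++ l₂) i + if a i then 1 else 0 := by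
  simp only [dbSum, List.map_append, List.map_cons, List.sum_append, List.sum_cons]
  ring

lemma Adjacent.abs_dbSum_sub_le_one {d : ℕ} {x x' : List (Fin d → Bool)} (h : Adjacent x x')
    (i : Fin d) : |dbSum x' i - dbSum x i| ≤ 1 := by
  rcases h with ⟨a, l₁, l₂, rfl, rfl⟩ | ⟨a, l₁, l₂, rfl, rfl⟩ <;>
    rw [dbSum_append_cons] <;> split <;> simp

lemma Adjacent.sum_sq_dbSum_sub_le {d : ℕ} {x x' : List (Fin d → Bool)} (h : Adjacent x x') :
    ∑ i, ((dbSum x' i : ℝ) - dbSum x i) ^ 2 ≤ d := by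
  calc ∑ i, ((dbSum x' i : ℝ) - dbSum x i) ^ 2 ≤ ∑ _i : Fin d, (1 : ℝ) :=
        sum_le_sum fun i _ ↦ by
          rw [sq_le_one_iff_abs_le_one]
          exact_mod_cast h.abs_dbSum_sub_le_one i
    _ = d := by simp

lemma chernoff_exponent_le {d ε L D : ℝ} (hd : 0 < d) (hε : 0 < ε) (hL : ε / 2 ≤ L)
    (hD : D ≤ d) :
    -(2 * L / ε * ε) + (2 * L / ε + (2 * L / ε) ^ 2) * D / (2 * (4 * d * L / ε ^ 2)) ≤ -L := by
  have hLpos : 0 < L := by linarith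
  have key : (2 * L / ε + (2 * L / ε) ^ 2) * D / (2 * (4 * d * L / ε ^ 2)) =
      (ε + 2 * L) * D / (4 * d) := by
    field_simp
  have hD' : (ε + 2 * L) * D / (4 * d) ≤ (ε + 2 * L) / 4 := by
    rw [div_le_div_iff₀ (by positivity) (by positivity)]
    nlinarith
  rw [key, div_mul_cancel₀ _ hε.ne']
  linarith

/-- The discrete Gaussian mechanism `M x = sum x + Y`, with the coordinates of `Y`
i.i.d. `N_ℤ(σ²)` for `σ² = 4 d ln(1/δ) / ε²`, is `(ε, δ)`-DP with respect to
insert-delete adjacency, provided `0 < δ ≤ e^{-ε/2}`. -/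
theorem stmt3 (d : ℕ) (hd : 1 ≤ d) (ε δ σ : ℝ) (hε : 0 < ε)
    (hδ0 : 0 < δ) (hδ : δ ≤ Real.exp (-ε / 2))
    (hσ : σ ^ 2 = 4 * (d : ℝ) * Real.log (1 / δ) / ε ^ 2)
    (G : PMF ℤ)
    (hG : ∀ x : ℤ, G x = ENNReal.ofReal
      (Real.exp (-(x : ℝ) ^ 2 / (2 * σ ^ 2)) /
        ∑' y : ℤ, Real.exp (-(y : ℝ) ^ 2 / (2 * σ ^ 2))))
    (M : List (Fin d → Bool) → PMF (Fin d → ℤ))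
    (hM : ∀ x y, M x y = ∏ i, G (y i - dbSum x i)) :
    IsDP Adjacent M ε δ := by
  intro x x' hadj S
  set L := Real.log (1 / δ) with hLdef
  have hL : ε / 2 ≤ L := by
    rw [hLdef, one_div, Real.log_inv, le_neg]
    simpa [neg_div] using Real.log_le_log hδ0 hδ
  have hLpos : 0 < L := by linarith
  have hd' : (0 : ℝ) < d := by exact_mod_cast hd
  have hσ2 : 0 < σ ^ 2 := by
    rw [hσ]
    positivity
  have hMG (x : List (Fin d → Bool)) :
      ⇑(M x) = fun y ↦ ∏ i, ENNReal.ofReal (discreteGaussian (σ ^ 2) (y i - dbSum x i)) :=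
    funext fun y ↦ by simp only [hM, hG]; rfl
  rw [PMF.toOuterMeasure_apply, PMF.toOuterMeasure_apply, hMG, hMG]
  refine (tsum_indicator_prod_discreteGaussian_le hσ2 (dbSum x) (dbSum x')
    (lam := 2 * L / ε) (by positivity) ε S).trans (add_le_add le_rfl (ENNReal.ofReal_le_ofReal ?_))
  calc _ ≤ Real.exp (-L) := by
        gcongr
        rw [hσ]
        exact chernoff_exponent_le hd' hε hL hadj.sum_sq_dbSum_sub_le
    _ = δ := by rw [hLdef, one_div, Real.log_inv, neg_neg, Real.exp_log hδ0]
end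

section
/- Let r and s be positive integers. For every integer v, every ω ∈ {r, 2r, ..., sr}, and every integer η with |η| < r, one has |⌊v + ω + η⌋_{rs} − v| ≤ r(2s + 1). Consequently, the mechanism that on input x ∈ ({0,1}^d)^* samples ω uniformly from {r, 2r, ..., sr} and η₁, ..., η_d independently from any distribution supported on {η ∈ ℤ : |η| < r}, and outputs (⌊sum(x)_i + ω + η_i⌋_{rs})_i, satisfies ‖output − sum(x)‖_∞ ≤ r(2s + 1) with probability 1. -/
open scoped ENNReal

lemma part1_aux (r s : ℕ) (hr : 0 < r) (hs : 0 < s) (v : ℤ) (j : ℕ)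
    (hj : j ∈ Finset.Icc 1 s) (η : ℤ) (hη : |η| < (r : ℤ)) :
    |rdown (r * s) (v + (j : ℤ) * (r : ℤ) + η) - v| ≤ (r : ℤ) * (2 * (s : ℤ) + 1) := by
  simp only [Finset.mem_Icc] at hj
  obtain ⟨hj1, hj2⟩ := hj
  unfold rdown
  set z := v + (j : ℤ) * r + η with hz
  have hrs : (0 : ℤ) < ((r * s : ℕ) : ℤ) := by positivity
  have hm0 := Int.emod_nonneg z (ne_of_gt hrs)
  have hm1 := Int.emod_lt_of_pos z hrs
  have hjr1 : (r : ℤ) ≤ (j : ℤ) * r := by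
    have : (1 : ℤ) ≤ (j : ℤ) := by exact_mod_cast hj1
    nlinarith
  have hjr2 : (j : ℤ) * r ≤ (s : ℤ) * r := by
    have : (j : ℤ) ≤ (s : ℤ) := by exact_mod_cast hj2
    nlinarith
  rw [abs_lt] at hη
  rw [abs_le]
  have hrw : z - z % ((r * s : ℕ) : ℤ) - v = (j : ℤ) * r + η - z % ((r * s : ℕ) : ℤ) := by
    rw [hz]; ring
  rw [hrw]
  push_cast at hm0 hm1 ⊢
  constructor <;> nlinarith

/-- For every `v`, every `ω ∈ {r, 2r, …, sr}` and every `η` with `|η| < r`, we have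
`|⌊v + ω + η⌋_{rs} − v| ≤ r(2s+1)`; consequently, the mechanism that shifts by a
uniform `ω ∈ {r, …, sr}`, adds independent noise supported on `(-r, r)` to each
coordinate and rounds down to a multiple of `rs`, is within `r(2s+1)` of `sum(x)`
in `‖·‖_∞` with probability `1`. -/
theorem stmt10 (r s : ℕ) (hr : 0 < r) (hs : 0 < s) :
    (∀ (v : ℤ) (j : ℕ), j ∈ Finset.Icc 1 s → ∀ η : ℤ, |η| < (r : ℤ) →
      |rdown (r * s) (v + (j : ℤ) * (r : ℤ) + η) - v| ≤ (r : ℤ) * (2 * (s : ℤ) + 1)) ∧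
    (∀ (d : ℕ) (x : List (Fin d → Bool)) (D : Fin d → PMF ℤ),
      (∀ i (η : ℤ), (D i) η ≠ 0 → |η| < (r : ℤ)) →
      ∀ M : PMF (Fin d → ℤ),
        (∀ y : Fin d → ℤ, M y = (s : ℝ≥0∞)⁻¹ * ∑ j ∈ Finset.Icc 1 s, ∏ i,
          ∑' η : ℤ,
            if rdown (r * s) (dbSum x i + (j : ℤ) * (r : ℤ) + η) = y i
            then D i η else 0) →
        M.toOuterMeasure
            {y : Fin d → ℤ | ∀ i, |y i - dbSum x i| ≤ (r : ℤ) * (2 * (s : ℤ) + 1)}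
          = 1) := by
  constructor
  · exact fun v j hj η hη => part1_aux r s hr hs v j hj η hη
  · intro d x D hD M hM
    rw [PMF.toOuterMeasure_apply_eq_one_iff]
    intro y hy
    simp only [Set.mem_setOf_eq]
    intro i
    have hMy : M y ≠ 0 := hy
    rw [hM] at hMy
    have hsum : (∑ j ∈ Finset.Icc 1 s, ∏ i, ∑' η : ℤ,
        if rdown (r * s) (dbSum x i + (j : ℤ) * (r : ℤ) + η) = y i
        then D i η else 0) ≠ 0 := by
      intro h; rw [h] at hMy; simp at hMy
    obtain ⟨j, hj, hjne⟩ := Finset.exists_ne_zero_of_sum_ne_zero hsum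
    rw [Finset.prod_ne_zero_iff] at hjne
    have hi := hjne i (Finset.mem_univ i)
    have : ∃ η : ℤ, (if rdown (r * s) (dbSum x i + (j : ℤ) * (r : ℤ) + η) = y i
        then D i η else 0) ≠ 0 := by
      by_contra hc
      push_neg at hc
      exact hi (by simp [hc])
    obtain ⟨η, hηne⟩ := this
    by_cases hcond : rdown (r * s) (dbSum x i + (j : ℤ) * (r : ℤ) + η) = y i
    · have hDη : D i η ≠ 0 := by simpa [hcond] using hηne
      have := part1_aux r s hr hs (dbSum x i) j hj η (hD i η hDη)
      rwa [hcond] at this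
    · simp [hcond] at hηne
end

section
/- Let d ≥ 1 be an integer and ε > 0. The mechanism M : ({0,1}^d)^* → ℤ^d defined by M(x) = sum(x) + η, where η ∈ ℤ^d has coordinates independently distributed as the discrete Laplace distribution Lap_ℤ(d/ε), is (ε, 0)-differentially private with respect to insert-delete adjacency. -/
open scoped ENNReal

lemma dbSum_insert {d : ℕ} (a : Fin d → Bool) (l₁ l₂ : List (Fin d → Bool)) (i : Fin d) :
    dbSum (l₁ ++ a :: l₂) i - dbSum (l₁ ++ l₂) i = if a i then 1 else 0 := by
  simp [dbSum]

/-- The discrete Laplace mechanism `M x = sum x + η`, with the coordinates of `η`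
i.i.d. `Lap_ℤ(d/ε)`, is `(ε, 0)`-DP with respect to insert-delete adjacency. -/
theorem stmt11 (d : ℕ) (hd : 1 ≤ d) (ε : ℝ) (hε : 0 < ε)
    (L : PMF ℤ)
    (hL : ∀ x : ℤ, L x = ENNReal.ofReal
      ((Real.exp (1 / ((d : ℝ) / ε)) - 1) / (Real.exp (1 / ((d : ℝ) / ε)) + 1) *
        Real.exp (-|(x : ℝ)| / ((d : ℝ) / ε))))
    (M : List (Fin d → Bool) → PMF (Fin d → ℤ))
    (hM : ∀ x y, M x y = ∏ i, L (y i - dbSum x i)) :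
    IsDP Adjacent M ε 0 := by
  intro x x' hadj S
  have hd' : (0:ℝ) < d := by exact_mod_cast hd
  set t : ℝ := (d : ℝ) / ε with ht
  have ht0 : 0 < t := div_pos hd' hε
  -- sensitivity bound
  have hsum : ∀ i, |dbSum x' i - dbSum x i| ≤ 1 := by
    intro i
    rcases hadj with ⟨a, l₁, l₂, hx, hx'⟩ | ⟨a, l₁, l₂, hx', hx⟩
    · subst hx; subst hx'
      rw [dbSum_insert]
      split <;> norm_num
    · subst hx; subst hx'
      rw [abs_sub_comm, dbSum_insert]
      split <;> norm_num
  -- one-coordinate bound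
  have hLkey : ∀ a b : ℤ, |a - b| ≤ 1 →
      L a ≤ ENNReal.ofReal (Real.exp (ε / d)) * L b := by
    intro a b hab
    rw [hL a, hL b, ← ENNReal.ofReal_mul (Real.exp_pos _).le]
    apply ENNReal.ofReal_le_ofReal
    have hC : 0 ≤ (Real.exp (1/t) - 1) / (Real.exp (1/t) + 1) := by
      apply div_nonneg
      · have := Real.one_le_exp (le_of_lt (by positivity : (0:ℝ) < 1/t))
        linarith
      · positivity
    have hεd : ε / (d : ℝ) = 1 / t := by
      rw [ht]; field_simp
    rw [hεd]
    have habR : |(a:ℝ) - (b:ℝ)| ≤ 1 := by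
      have : ((|a - b| : ℤ) : ℝ) ≤ 1 := by exact_mod_cast hab
      simpa using this
    have hexp : Real.exp (-|(a:ℝ)| / t) ≤ Real.exp (1/t) * Real.exp (-|(b:ℝ)| / t) := by
      rw [← Real.exp_add, ← add_div]
      apply Real.exp_le_exp.mpr
      rw [div_le_div_iff_of_pos_right ht0]
      have h2 : |(b:ℝ)| - |(a:ℝ)| ≤ |(a:ℝ) - (b:ℝ)| := by
        rw [abs_sub_comm]; exact abs_sub_abs_le_abs_sub _ _
      linarith
    refine le_trans (mul_le_mul_of_nonneg_left hexp hC) (le_of_eq (by ring))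
  -- pointwise bound on M
  have hpt : ∀ y, M x y ≤ ENNReal.ofReal (Real.exp ε) * M x' y := by
    intro y
    rw [hM, hM]
    calc ∏ i, L (y i - dbSum x i)
        ≤ ∏ i, (ENNReal.ofReal (Real.exp (ε / d)) * L (y i - dbSum x' i)) := by
          apply Finset.prod_le_prod'
          intro i _
          apply hLkey
          have h1 : (y i - dbSum x i) - (y i - dbSum x' i) = dbSum x' i - dbSum x i := by ring
          rw [h1]
          exact hsum i
      _ = ENNReal.ofReal (Real.exp (ε / d)) ^ d * ∏ i, L (y i - dbSum x' i) := by
          rw [Finset.prod_mul_distrib, Finset.prod_const, Finset.card_univ, Fintype.card_fin]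
      _ = ENNReal.ofReal (Real.exp ε) * ∏ i, L (y i - dbSum x' i) := by
          congr 1
          rw [← ENNReal.ofReal_pow (Real.exp_pos _).le, ← Real.exp_nat_mul]
          congr 1
          field_simp
  -- sum over S
  simp only [PMF.toOuterMeasure_apply, ENNReal.ofReal_zero, add_zero]
  rw [← ENNReal.tsum_mul_left]
  apply ENNReal.tsum_le_tsum
  intro y
  by_cases hy : y ∈ S
  · simpa [Set.indicator_of_mem hy] using hpt y
  · simp [Set.indicator_of_notMem hy]
end

section
/- Let t > 0 and let X be a random variable with the discrete Laplace distribution Lap_ℤ(t). Then for every integer T ≥ 0 and every integer k ≥ 0, P[X = T + k | X ≥ T] = (1 − e^{−1/t})·e^{−k/t}; that is, conditioned on X ≥ T, the random variable X − T has the geometric distribution on {0, 1, 2, ...} with success probability 1 − e^{−1/t}. -/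
open scoped ENNReal

/-- Memorylessness of the discrete Laplace distribution: for `X ∼ Lap_ℤ(t)`, integers
`T, k ≥ 0`, `P[X = T + k | X ≥ T] = (1 − e^{−1/t}) e^{−k/t}`; i.e. conditioned on
`X ≥ T`, `X − T` is geometric with success probability `1 − e^{−1/t}`. -/
theorem stmt14 (t : ℝ) (ht : 0 < t) (X : PMF ℤ)
    (hX : ∀ x : ℤ, X x = ENNReal.ofReal
      ((Real.exp (1 / t) - 1) / (Real.exp (1 / t) + 1) * Real.exp (-|(x : ℝ)| / t)))
    (T k : ℕ) :
    X ((T : ℤ) + (k : ℤ)) / X.toOuterMeasure {x : ℤ | (T : ℤ) ≤ x} =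
      ENNReal.ofReal ((1 - Real.exp (-1 / t)) * Real.exp (-(k : ℝ) / t)) := by
  set c : ℝ := (Real.exp (1 / t) - 1) / (Real.exp (1 / t) + 1) with hc
  set r : ℝ := Real.exp (-1 / t) with hr
  have hexp1 : (1:ℝ) < Real.exp (1 / t) := by
    rw [show (1:ℝ) = Real.exp 0 by simp]
    exact Real.exp_lt_exp.mpr (by positivity)
  have hcpos : 0 < c := by
    apply div_pos <;> nlinarith
  have hr0 : 0 < r := Real.exp_pos _
  have hr1 : r < 1 := by
    rw [hr, show (1:ℝ) = Real.exp 0 by simp]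
    rw [neg_div]
    exact Real.exp_lt_exp.mpr (by simpa using (by positivity : (0:ℝ) < 1/t))
  -- formula for nonneg values
  have hXn : ∀ n : ℕ, X ((T : ℤ) + n) = ENNReal.ofReal (c * Real.exp (-(T:ℝ)/t) * r ^ n) := by
    intro n
    rw [hX]
    congr 1
    have h1 : |((((T:ℤ) + n) : ℤ) : ℝ)| = (T:ℝ) + n := by
      push_cast
      rw [abs_of_nonneg]; positivity
    rw [h1, hc, hr, ← Real.exp_nat_mul]
    rw [mul_assoc, ← Real.exp_add]
    ring_nf
  have hsummand_nonneg : ∀ n : ℕ, 0 ≤ c * Real.exp (-(T:ℝ)/t) * r ^ n := fun n => by positivity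
  have hsum : Summable (fun n : ℕ => c * Real.exp (-(T:ℝ)/t) * r ^ n) :=
    (summable_geometric_of_lt_one hr0.le hr1).mul_left _
  have htsum : (∑' n : ℕ, c * Real.exp (-(T:ℝ)/t) * r ^ n)
      = c * Real.exp (-(T:ℝ)/t) / (1 - r) := by
    rw [tsum_mul_left, tsum_geometric_of_lt_one hr0.le hr1]
    ring
  have hmeas : X.toOuterMeasure {x : ℤ | (T:ℤ) ≤ x}
      = ENNReal.ofReal (c * Real.exp (-(T:ℝ)/t) / (1 - r)) := by
    rw [PMF.toOuterMeasure_apply]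
    have hinj : Function.Injective (fun n : ℕ => (T:ℤ) + n) := by
      intro a b hab; simpa using hab
    have hsupp : Function.support (Set.indicator {x : ℤ | (T:ℤ) ≤ x} X)
        ⊆ Set.range (fun n : ℕ => (T:ℤ) + n) := by
      intro x hx
      have hx' : Set.indicator {x : ℤ | (T:ℤ) ≤ x} (⇑X) x ≠ 0 := hx
      have hxmem : x ∈ {x : ℤ | (T:ℤ) ≤ x} := Set.mem_of_indicator_ne_zero hx'
      have hxmem' : (T:ℤ) ≤ x := hxmem
      exact ⟨(x - T).toNat, by show (T:ℤ) + ((x - T).toNat : ℤ) = x; omega⟩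
    rw [← hinj.tsum_eq hsupp]
    have : ∀ n : ℕ, Set.indicator {x : ℤ | (T:ℤ) ≤ x} X ((T:ℤ) + n)
        = ENNReal.ofReal (c * Real.exp (-(T:ℝ)/t) * r ^ n) := by
      intro n
      rw [Set.indicator_of_mem (by simp : ((T:ℤ) + n) ∈ {x : ℤ | (T:ℤ) ≤ x}), hXn]
    rw [tsum_congr this, ← ENNReal.ofReal_tsum_of_nonneg hsummand_nonneg hsum, htsum]
  have hden : (0:ℝ) < c * Real.exp (-(T:ℝ)/t) / (1 - r) :=
    div_pos (mul_pos hcpos (Real.exp_pos _)) (by linarith)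
  rw [hmeas, hXn k, ← ENNReal.ofReal_div_of_pos hden]
  congr 1
  have hrk : Real.exp (-(k:ℝ)/t) = r ^ k := by
    rw [hr, ← Real.exp_nat_mul]; ring_nf
  rw [hrk]
  have hc0 : c ≠ 0 := ne_of_gt hcpos
  have he0 : Real.exp (-(T:ℝ)/t) ≠ 0 := (Real.exp_pos _).ne'
  have h1r : (1:ℝ) - r ≠ 0 := by linarith
  field_simp
end

section
/- Let t > 0, let X be a random variable with the discrete Laplace distribution Lap_ℤ(t), and let T ≥ 1 be an integer. Then the distribution of X conditioned on |X| ≥ T equals the distribution of σ·(W + T), where σ is uniform on {−1, +1}, W has the geometric distribution on {0, 1, 2, ...} with success probability 1 − e^{−1/t}, and σ and W are independent. -/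
open scoped ENNReal Classical

/-!
With `q = e^{-1/t}`, both sides vanish off `{|x| ≥ T}`, and on that set the conditioned law is
proportional to `q^|x|` while `σ (W + T)` puts mass `(1 - q) q^(|x| - T) / 2` on `x` (the two
signs never collide because `T ≥ 1`). Two probability mass functions that are proportional are
equal, since both sum to one, so the normalising constant `P[|X| ≥ T]` never has to be computed.
-/

namespace PMF

theorem eq_of_forall_apply_eq_mul {α : Type*} {p p' : PMF α} (K : ℝ≥0∞)
    (h : ∀ x, p x = K * p' x) : p = p' := by
  have hK : K = 1 := by
    simpa [ENNReal.tsum_mul_left, p'.tsum_coe] using (tsum_congr h).symm.trans p.tsum_coe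
  exact PMF.ext fun x => by rw [h x, hK, one_mul]

theorem map_uniformSign_mul_apply (hs : ({-1, 1} : Finset ℤ).Nonempty) {m : ℤ} (hm : 0 < m)
    (x : ℤ) : (uniformOfFinset {-1, 1} hs).map (· * m) x = if |x| = m then 2⁻¹ else 0 := by
  rw [map_apply, tsum_eq_sum (s := {-1, 1}) fun b hb => by simp [hb],
    Finset.sum_pair (by norm_num)]
  simp only [uniformOfFinset_apply, Finset.mem_insert, Finset.mem_singleton, true_or, or_true,
    if_true, Finset.card_pair (show (-1 : ℤ) ≠ 1 by norm_num), neg_mul, one_mul, Nat.cast_ofNat,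
    abs_eq hm.le]
  split_ifs <;> first | omega | simp

noncomputable def signedShift (W : PMF ℕ) (T : ℕ) : PMF ℤ :=
  W.bind fun w => (uniformOfFinset {-1, 1} ⟨-1, by simp⟩).map fun sg => sg * ((w : ℤ) + T)

theorem signedShift_apply (W : PMF ℕ) {T : ℕ} (hT : 1 ≤ T) (x : ℤ) :
    signedShift W T x = if (T : ℤ) ≤ |x| then W (x.natAbs - T) * 2⁻¹ else 0 := by
  have hsign := fun w : ℕ => map_uniformSign_mul_apply ⟨-1, by simp⟩ (m := w + T) (by omega) x
  simp only [signedShift, bind_apply, hsign, mul_ite, mul_zero, Int.abs_eq_natAbs]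
  split_ifs with hx
  · have key : ∀ w : ℕ, (x.natAbs : ℤ) = w + T ↔ w = x.natAbs - T := fun w => by omega
    simp only [key, tsum_ite_eq]
  · exact ENNReal.tsum_eq_zero.mpr fun w => if_neg (by omega)

theorem eq_signedShift_of_apply_eq {C : PMF ℤ} {W : PMF ℕ} {T : ℕ} (hT : 1 ≤ T) {a q : ℝ≥0∞}
    (hq : q < 1) (hC : ∀ x, C x = if (T : ℤ) ≤ |x| then a * q ^ x.natAbs else 0)
    (hW : ∀ k, W k = (1 - q) * q ^ k) : C = signedShift W T := by
  refine eq_of_forall_apply_eq_mul (2 * a * q ^ T * (1 - q)⁻¹) fun x => ?_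
  rw [hC, signedShift_apply W hT]
  split_ifs with hx
  · have hTx : T ≤ x.natAbs := by rw [Int.abs_eq_natAbs] at hx; exact_mod_cast hx
    rw [hW, ← Nat.sub_add_cancel hTx, pow_add, Nat.add_sub_cancel]
    have h2 : (2 : ℝ≥0∞) * 2⁻¹ = 1 := ENNReal.mul_inv_cancel two_ne_zero ENNReal.ofNat_ne_top
    have h1q : (1 - q)⁻¹ * (1 - q) = 1 :=
      ENNReal.inv_mul_cancel (tsub_pos_of_lt hq).ne' (ENNReal.sub_ne_top ENNReal.one_ne_top)
    calc a * (q ^ (x.natAbs - T) * q ^ T)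
        = (2 * 2⁻¹) * ((1 - q)⁻¹ * (1 - q)) * (a * (q ^ (x.natAbs - T) * q ^ T)) := by
          rw [h2, h1q, one_mul, one_mul]
      _ = _ := by ring
  · rw [mul_zero]

end PMF

theorem Real.exp_neg_abs_div_eq_pow (t : ℝ) (x : ℤ) :
    Real.exp (-|(x : ℝ)| / t) = Real.exp (-1 / t) ^ x.natAbs := by
  rw [← Real.exp_nat_mul, Nat.cast_natAbs, Int.cast_abs]
  ring_nf

/-- For `X ∼ Lap_ℤ(t)` and an integer `T ≥ 1`, the distribution of `X` conditioned on
`|X| ≥ T` equals the distribution of `σ (W + T)` where `σ` is a uniform sign and `W`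
is geometric on `{0, 1, 2, …}` with success probability `1 − e^{−1/t}`, independent
of `σ`. -/
theorem stmt15 (t : ℝ) (ht : 0 < t) (X : PMF ℤ)
    (hX : ∀ x : ℤ, X x = ENNReal.ofReal
      ((Real.exp (1 / t) - 1) / (Real.exp (1 / t) + 1) * Real.exp (-|(x : ℝ)| / t)))
    (T : ℕ) (hT : 1 ≤ T)
    (C : PMF ℤ)
    (hC : ∀ x : ℤ, C x =
      (if (T : ℤ) ≤ |x| then X x else 0) / X.toOuterMeasure {z : ℤ | (T : ℤ) ≤ |z|})
    (W : PMF ℕ)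
    (hW : ∀ k : ℕ, W k =
      ENNReal.ofReal ((1 - Real.exp (-1 / t)) * Real.exp (-1 / t) ^ k)) :
    C = W.bind (fun w =>
      (PMF.uniformOfFinset ({-1, 1} : Finset ℤ) ⟨-1, by simp⟩).map
        (fun sg => sg * ((w : ℤ) + (T : ℤ)))) := by
  set q := Real.exp (-1 / t)
  have hq0 : 0 ≤ q := (Real.exp_pos _).le
  have hq1 : q < 1 :=
    Real.exp_lt_one_iff.mpr (by rw [neg_div]; exact neg_neg_of_pos (by positivity))
  refine PMF.eq_signedShift_of_apply_eq hT (ENNReal.ofReal_lt_one.mpr hq1)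
    (a := ENNReal.ofReal ((Real.exp (1 / t) - 1) / (Real.exp (1 / t) + 1)) /
      X.toOuterMeasure {z : ℤ | (T : ℤ) ≤ |z|}) (fun x => ?_) (fun k => ?_)
  · rw [hC, hX, Real.exp_neg_abs_div_eq_pow, ENNReal.ofReal_mul' (pow_nonneg hq0 _),
      ENNReal.ofReal_pow hq0]
    split_ifs
    · simp only [div_eq_mul_inv]; ring
    · exact ENNReal.zero_div
  · rw [hW, ENNReal.ofReal_mul (sub_nonneg.mpr hq1.le), ENNReal.ofReal_sub _ hq0,
      ENNReal.ofReal_one, ENNReal.ofReal_pow hq0]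
end

section
/- Let d ≥ 1 be an integer, ε > 0, β ∈ (0, 1], and let m and s be positive integers. Consider the mechanism that on input x ∈ ({0,1}^d)^* samples ω uniformly from {m, 2m, ..., sm}, samples η₁, ..., η_d independently from the discrete Laplace distribution Lap_ℤ(d/ε), and outputs (⌊sum(x)_i + ω + η_i⌋_{ms})_{i=1}^d. Then P[‖output − sum(x)‖_∞ > 1 + (d/ε)·ln(d/β) + 2ms] ≤ β. -/
/-!
Given the shift `ω = j m`, the output coordinates are independent, and coordinate `i` differs
from `sum(x)_i` by `η_i` plus the rounding error `ω - (z mod ms) ∈ (-ms, ms]`. A deviation beyond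
`A + 2ms`, with `A = 1 + t ln(d/β)` and `t = d/ε`, therefore forces `|η_i| > A`, and a geometric
tail sum gives `P[|η| > A] ≤ e^{-(A-1)/t} = β/d` for `η ~ Lap_ℤ(t)`. A union bound over the `d`
coordinates and averaging over `ω` give `β`.
-/

open scoped ENNReal

open MeasureTheory

lemma ENNReal.tsum_int_natAbs_le (f : ℕ → ℝ≥0∞) :
    ∑' η : ℤ, f η.natAbs ≤ 2 * ∑' n, f n :=
  calc ∑' η : ℤ, f η.natAbs ≤ ∑' η : ℤ, f η.natAbs + f 0 := le_self_add
    _ = ∑' n : ℕ, (f n + f n) := by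
        simpa using (tsum_nat_add_neg (f := fun η : ℤ => f η.natAbs) ENNReal.summable).symm
    _ = 2 * ∑' n, f n := by rw [ENNReal.tsum_add, two_mul]

lemma ENNReal.tsum_ite_lt_pow (r : ℝ≥0∞) (k : ℕ) :
    ∑' n : ℕ, (if k < n then r ^ n else 0) = r ^ (k + 1) * (1 - r)⁻¹ := by
  rw [← ENNReal.summable.sum_add_tsum_nat_add' (k := k + 1),
    Finset.sum_eq_zero fun n hn => if_neg (by simp at hn; omega), zero_add,
    ← ENNReal.tsum_geometric, ← ENNReal.tsum_mul_left]
  exact tsum_congr fun n => by rw [if_pos (by omega), pow_add, mul_comm]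

lemma ENNReal.inv_card_mul_sum_le {ι : Type*} (t : Finset ι) {a : ι → ℝ≥0∞} {b : ℝ≥0∞}
    (h : ∀ j ∈ t, a j ≤ b) : (t.card : ℝ≥0∞)⁻¹ * ∑ j ∈ t, a j ≤ b := by
  rw [← ENNReal.div_eq_inv_mul]
  refine ENNReal.div_le_of_le_mul ?_
  rw [mul_comm, ← nsmul_eq_mul]
  exact t.sum_le_card_nsmul a b h

noncomputable def discreteLaplaceMass (t : ℝ) (x : ℤ) : ℝ :=
  (Real.exp (1 / t) - 1) / (Real.exp (1 / t) + 1) * Real.exp (-|(x : ℝ)| / t)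

lemma discreteLaplaceMass_eq (t : ℝ) (x : ℤ) :
    discreteLaplaceMass t x =
      (1 - Real.exp (-1 / t)) / (1 + Real.exp (-1 / t)) * Real.exp (-1 / t) ^ x.natAbs := by
  have hpow : Real.exp (-|(x : ℝ)| / t) = Real.exp (-1 / t) ^ x.natAbs := by
    rw [← Real.exp_nat_mul, Nat.cast_natAbs, Int.cast_abs]
    ring_nf
  have hinv : Real.exp (-1 / t) = (Real.exp (1 / t))⁻¹ := by rw [neg_div, Real.exp_neg]
  have hE := Real.exp_pos (1 / t)
  rw [discreteLaplaceMass, hpow, hinv]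
  field_simp

lemma discreteLaplace_tail_natAbs_le {t : ℝ} (ht : 0 < t) {L : PMF ℤ}
    (hL : ∀ x, L x = ENNReal.ofReal (discreteLaplaceMass t x)) (k : ℕ) :
    L.toOuterMeasure {η | k < η.natAbs} ≤ ENNReal.ofReal (Real.exp (-k / t)) := by
  set q := Real.exp (-1 / t)
  set c := (1 - q) / (1 + q) with hc_def
  have hq₀ : 0 ≤ q := (Real.exp_pos _).le
  have hq₁ : q < 1 := Real.exp_lt_one_iff.mpr (div_neg_of_neg_of_pos (by norm_num) ht)
  have hc : 0 ≤ c := div_nonneg (by linarith) (by linarith)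
  have hgeom : 2 * c * q ^ (k + 1) * (1 - q)⁻¹ ≤ q ^ k := by
    have : 1 - q ≠ 0 := by linarith
    calc 2 * c * q ^ (k + 1) * (1 - q)⁻¹ = q ^ k * (2 * q / (1 + q)) := by
          rw [hc_def]
          field_simp
          ring
      _ ≤ q ^ k := mul_le_of_le_one_right (pow_nonneg hq₀ k)
          ((div_le_one (by linarith)).mpr (by linarith))
  calc L.toOuterMeasure {η | k < η.natAbs}
      = ∑' η : ℤ, ENNReal.ofReal c * (if k < η.natAbs then ENNReal.ofReal q ^ η.natAbs else 0) := by
        rw [PMF.toOuterMeasure_apply]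
        refine tsum_congr fun η => ?_
        simp only [Set.indicator_apply, Set.mem_ofPred_eq, hL, discreteLaplaceMass_eq, mul_ite,
          mul_zero]
        rw [← ENNReal.ofReal_pow hq₀, ← ENNReal.ofReal_mul hc]
    _ ≤ 2 * ∑' n : ℕ, ENNReal.ofReal c * (if k < n then ENNReal.ofReal q ^ n else 0) :=
        ENNReal.tsum_int_natAbs_le _
    _ = ENNReal.ofReal (2 * c * q ^ (k + 1) * (1 - q)⁻¹) := by
        rw [ENNReal.tsum_mul_left, ENNReal.tsum_ite_lt_pow, ← ENNReal.ofReal_one,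
          ← ENNReal.ofReal_sub _ hq₀, ← ENNReal.ofReal_inv_of_pos (by linarith),
          ← ENNReal.ofReal_pow hq₀, ← ENNReal.ofReal_mul (pow_nonneg hq₀ _),
          ← ENNReal.ofReal_mul hc, ← ENNReal.ofReal_ofNat 2, ← ENNReal.ofReal_mul (by norm_num)]
        ring_nf
    _ ≤ ENNReal.ofReal (Real.exp (-k / t)) := by
        refine ENNReal.ofReal_le_ofReal (hgeom.trans_eq ?_)
        rw [← Real.exp_nat_mul]
        ring_nf

lemma discreteLaplace_tail_le {t : ℝ} (ht : 0 < t) {L : PMF ℤ}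
    (hL : ∀ x, L x = ENNReal.ofReal (discreteLaplaceMass t x)) (A : ℝ) :
    L.toOuterMeasure {η | A < |(η : ℝ)|} ≤ ENNReal.ofReal (Real.exp (-(A - 1) / t)) := by
  rcases lt_or_ge A 0 with hA | hA
  · calc L.toOuterMeasure {η | A < |(η : ℝ)|} ≤ ∑' η, L η := by
          rw [PMF.toOuterMeasure_apply]
          exact ENNReal.tsum_le_tsum fun η => Set.indicator_le_self _ _ η
      _ = 1 := L.tsum_coe
      _ ≤ _ := ENNReal.one_le_ofReal.mpr (Real.one_le_exp (div_nonneg (by linarith) ht.le))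
  · have hsub : {η : ℤ | A < |(η : ℝ)|} ⊆ {η | ⌊A⌋₊ < η.natAbs} := fun η hη => by
      rwa [Set.mem_ofPred_eq, Nat.floor_lt hA, Nat.cast_natAbs, Int.cast_abs]
    refine (L.toOuterMeasure.mono hsub).trans ((discreteLaplace_tail_natAbs_le ht hL _).trans ?_)
    exact ENNReal.ofReal_le_ofReal (Real.exp_le_exp.mpr
      (div_le_div_of_nonneg_right (by linarith [Nat.lt_floor_add_one A]) ht.le))

lemma abs_rdown_add_add_sub_le {k : ℕ} (hk : 0 < k) {ω : ℤ} (hω₀ : 0 ≤ ω) (hωk : ω ≤ k)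
    (c η : ℤ) : |rdown k (c + ω + η) - c| ≤ |η| + k := by
  have h₀ := Int.emod_nonneg (c + ω + η) (Int.natCast_ne_zero.mpr hk.ne')
  have h₁ := Int.emod_lt_of_pos (c + ω + η) (Int.natCast_pos.mpr hk)
  unfold rdown
  rw [abs_le]
  constructor <;> linarith [neg_abs_le η, le_abs_self η]

lemma discreteLaplace_rdown_tail_le {t : ℝ} (ht : 0 < t) {L : PMF ℤ}
    (hL : ∀ x, L x = ENNReal.ofReal (discreteLaplaceMass t x)) {k : ℕ} (hk : 0 < k) {ω : ℤ}
    (hω₀ : 0 ≤ ω) (hωk : ω ≤ k) (c : ℤ) {A T : ℝ} (hT : A + k ≤ T) :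
    (L.map fun η => rdown k (c + ω + η)).toOuterMeasure {v | T < |((v - c : ℤ) : ℝ)|}
      ≤ ENNReal.ofReal (Real.exp (-(A - 1) / t)) := by
  rw [PMF.toOuterMeasure_map_apply]
  refine (L.toOuterMeasure.mono fun η hη => ?_).trans (discreteLaplace_tail_le ht hL A)
  have : |((rdown k (c + ω + η) - c : ℤ) : ℝ)| ≤ |(η : ℝ)| + k := by
    exact_mod_cast abs_rdown_add_add_sub_le hk hω₀ hωk c η
  simp only [Set.mem_preimage, Set.mem_ofPred_eq] at hη ⊢
  linarith

lemma PMF.tsum_indicator_prod_le {ι α : Type*} [Fintype ι] [Countable α]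
    (p : ι → PMF α) (B : ι → Set α) :
    ∑' y : ι → α, {y | ∃ i, y i ∈ B i}.indicator (fun y => ∏ i, p i (y i)) y
      ≤ ∑ i, (p i).toOuterMeasure (B i) := by
  -- `∏ i, p i (y i)` is the mass of `{y}` under the product of the measures `p i`, so this is
  -- the union bound for that product measure.
  let _ : MeasurableSpace α := ⊤
  have : DiscreteMeasurableSpace α := ⟨fun _ => trivial⟩
  let μ := Measure.pi fun i => (p i).toMeasure
  have hμ : ∀ y, μ {y} = ∏ i, p i (y i) := fun y => by
    simp [μ, ← Set.univ_pi_singleton, Measure.pi_pi, PMF.toMeasure_apply_singleton]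
  have hS : {y : ι → α | ∃ i, y i ∈ B i} = ⋃ i, Function.eval i ⁻¹' B i := by ext; simp
  simp_rw [← hμ]
  rw [Measure.tsum_indicator_apply_singleton _ _ (Set.to_countable _).measurableSet, hS]
  refine (measure_iUnion_fintype_le μ _).trans_eq (Finset.sum_congr rfl fun i _ => ?_)
  exact ((measurePreserving_eval _ i).measure_preimage
    (MeasurableSet.of_discrete.nullMeasurableSet)).trans
    (PMF.toMeasure_apply_eq_toOuterMeasure _ _)

lemma PMF.toOuterMeasure_exists_mem_le_of_eq_avg_prod {κ ι α : Type*} [Fintype ι] [Countable α]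
    {M : PMF (ι → α)} (t : Finset κ) (p : κ → ι → PMF α)
    (hM : ∀ y, M y = (t.card : ℝ≥0∞)⁻¹ * ∑ j ∈ t, ∏ i, p j i (y i)) (B : ι → Set α)
    {b : ℝ≥0∞} (hb : ∀ j ∈ t, ∑ i, (p j i).toOuterMeasure (B i) ≤ b) :
    M.toOuterMeasure {y | ∃ i, y i ∈ B i} ≤ b := by
  set S := {y : ι → α | ∃ i, y i ∈ B i}
  calc M.toOuterMeasure S
      = ∑' y, (t.card : ℝ≥0∞)⁻¹ * ∑ j ∈ t, S.indicator (fun y => ∏ i, p j i (y i)) y := by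
        rw [PMF.toOuterMeasure_apply]
        exact tsum_congr fun y => by by_cases hy : y ∈ S <;> simp [hy, hM]
    _ = (t.card : ℝ≥0∞)⁻¹ * ∑ j ∈ t, ∑' y, S.indicator (fun y => ∏ i, p j i (y i)) y := by
        rw [ENNReal.tsum_mul_left, Summable.tsum_finsetSum fun _ _ => ENNReal.summable]
    _ ≤ b := ENNReal.inv_card_mul_sum_le t fun j hj =>
        (PMF.tsum_indicator_prod_le (p j) B).trans (hb j hj)

theorem stmt17_general (d : ℕ) (ε β : ℝ) (hε : 0 < ε) (hβ0 : 0 < β)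
    (m s : ℕ) (hm : 0 < m)
    (L : PMF ℤ)
    (hL : ∀ x : ℤ, L x = ENNReal.ofReal
      ((Real.exp (1 / ((d : ℝ) / ε)) - 1) / (Real.exp (1 / ((d : ℝ) / ε)) + 1) *
        Real.exp (-|(x : ℝ)| / ((d : ℝ) / ε))))
    (x : List (Fin d → Bool))
    (M : PMF (Fin d → ℤ))
    (hM : ∀ y : Fin d → ℤ, M y = (s : ℝ≥0∞)⁻¹ * ∑ j ∈ Finset.Icc 1 s, ∏ i,
      ∑' η : ℤ,
        if rdown (m * s) (dbSum x i + (j : ℤ) * (m : ℤ) + η) = y i then L η else 0) :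
    M.toOuterMeasure
        {y : Fin d → ℤ | ∃ i,
          1 + ((d : ℝ) / ε) * Real.log ((d : ℝ) / β) + 2 * (m : ℝ) * (s : ℝ)
            < |((y i - dbSum x i : ℤ) : ℝ)|}
      ≤ ENNReal.ofReal β := by
  set A := 1 + ((d : ℝ) / ε) * Real.log ((d : ℝ) / β) with hA
  refine PMF.toOuterMeasure_exists_mem_le_of_eq_avg_prod (Finset.Icc 1 s)
    (fun j i => L.map fun η => rdown (m * s) (dbSum x i + (j : ℤ) * (m : ℤ) + η))
    (fun y => by simp [hM, PMF.map_apply, eq_comm (a := y _)])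
    (fun i => {v | A + 2 * (m : ℝ) * (s : ℝ) < |((v - dbSum x i : ℤ) : ℝ)|}) fun j hj => ?_
  obtain ⟨hj₁, hjs⟩ := Finset.mem_Icc.mp hj
  have hms : 0 < m * s := Nat.mul_pos hm (by omega)
  have hjm : (j : ℤ) * m ≤ ((m * s : ℕ) : ℤ) := by
    rw [mul_comm]
    exact_mod_cast Nat.mul_le_mul_left m hjs
  have hT : A + ((m * s : ℕ) : ℝ) ≤ A + 2 * m * s := by
    have : (0 : ℝ) ≤ m * s := by positivity
    push_cast
    linarith
  refine (Finset.sum_le_card_nsmul _ _ (ENNReal.ofReal β / d) fun i _ => ?_).trans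
    (by simpa using ENNReal.mul_div_le)
  have hd : (0 : ℝ) < d := Nat.cast_pos.mpr i.pos
  have htail : Real.exp (-(A - 1) / (d / ε)) = β / d := by
    rw [show -(A - 1) / (d / ε) = -Real.log (d / β) by rw [hA]; field_simp; ring, Real.exp_neg,
      Real.exp_log (by positivity), inv_div]
  calc _ ≤ ENNReal.ofReal (Real.exp (-(A - 1) / (d / ε))) :=
        discreteLaplace_rdown_tail_le (div_pos hd hε) hL hms (by positivity) hjm _ hT
    _ = ENNReal.ofReal β / d := by
        rw [htail, ENNReal.ofReal_div_of_pos hd, ENNReal.ofReal_natCast]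

/-- Accuracy of the randomized-shift-and-round discrete Laplace mechanism: the
mechanism that samples `ω` uniform on `{m, 2m, …, sm}`, samples `η₁, …, η_d` i.i.d.
`Lap_ℤ(d/ε)`, and outputs `(⌊sum(x)_i + ω + η_i⌋_{ms})_i`, satisfies
`P[‖output − sum(x)‖_∞ > 1 + (d/ε) ln(d/β) + 2ms] ≤ β`. -/
theorem stmt17 (d : ℕ) (hd : 1 ≤ d) (ε β : ℝ) (hε : 0 < ε) (hβ0 : 0 < β) (hβ : β ≤ 1)
    (m s : ℕ) (hm : 0 < m) (hs : 0 < s)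
    (L : PMF ℤ)
    (hL : ∀ x : ℤ, L x = ENNReal.ofReal
      ((Real.exp (1 / ((d : ℝ) / ε)) - 1) / (Real.exp (1 / ((d : ℝ) / ε)) + 1) *
        Real.exp (-|(x : ℝ)| / ((d : ℝ) / ε))))
    (x : List (Fin d → Bool))
    (M : PMF (Fin d → ℤ))
    (hM : ∀ y : Fin d → ℤ, M y = (s : ℝ≥0∞)⁻¹ * ∑ j ∈ Finset.Icc 1 s, ∏ i,
      ∑' η : ℤ,
        if rdown (m * s) (dbSum x i + (j : ℤ) * (m : ℤ) + η) = y i then L η else 0) :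
    M.toOuterMeasure
        {y : Fin d → ℤ | ∃ i,
          1 + ((d : ℝ) / ε) * Real.log ((d : ℝ) / β) + 2 * (m : ℝ) * (s : ℝ)
            < |((y i - dbSum x i : ℤ) : ℝ)|}
      ≤ ENNReal.ofReal β :=
  stmt17_general d ε β hε hβ0 m s hm L hL x M hM
end

section
/- Fix an integer d ≥ 1, ε > 0, positive integers m and s, and a vector v ∈ ℤ^d. Let p = P_{Y ∼ Lap_ℤ(d/ε)}[|Y| ≥ m], and assume 0 < p < 1. Consider two distributions on ℤ^d: (A) sample ω uniformly from {m, 2m, ..., sm} and η₁, ..., η_d i.i.d. from Lap_ℤ(d/ε), and output (⌊v_i + ω + η_i⌋_{ms})_{i=1}^d; (B) sample a random subset J ⊆ {1, ..., d} by including each index independently with probability p, sample ω uniformly from {m, 2m, ..., sm}, and for each i independently: if i ∈ J, sample η_i from Lap_ℤ(d/ε) conditioned on |η_i| ≥ m and set y_i = ⌊v_i + ω + η_i⌋_{ms}; if i ∉ J and ⌊v_i + ω − m⌋_{ms} = ⌊v_i + ω + m⌋_{ms}, set y_i = ⌊v_i + ω − m⌋_{ms}; otherwise sample η_i from Lap_ℤ(d/ε)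 conditioned on |η_i| < m and set y_i = ⌊v_i + ω + η_i⌋_{ms}; output (y₁, ..., y_d). Then distributions (A) and (B) are equal. -/
open scoped ENNReal

/-!
Since `0 < p < 1`, `L = p • Lge + (1 - p) • Llt` pointwise, so in every coordinate
the law of `⌊v_i + ω + η_i⌋_{ms}` under `L` is the corresponding mixture. Rounding down is
monotone, so when `⌊v_i + ω - m⌋_{ms} = ⌊v_i + ω + m⌋_{ms}` the value `⌊v_i + ω + η⌋_{ms}` is
the same for all `|η| < m`, i.e. on the support of `Llt`.
-/

lemma rdown_eq_mul_ediv (k : ℕ) (z : ℤ) : rdown k z = k * (z / k) := by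
  simp [rdown, Int.emod_def]

lemma rdown_monotone (k : ℕ) : Monotone (rdown k) := by
  intro a b hab
  rcases k.eq_zero_or_pos with rfl | hk
  · simp [rdown_eq_mul_ediv]
  · simp only [rdown_eq_mul_ediv]
    exact mul_le_mul_of_nonneg_left (Int.ediv_le_ediv (by exact_mod_cast hk) hab) (by positivity)

lemma rdown_eq_of_le_of_le {k : ℕ} {a b x : ℤ} (hab : rdown k a = rdown k b)
    (hax : a ≤ x) (hxb : x ≤ b) : rdown k x = rdown k a :=
  le_antisymm (hab ▸ rdown_monotone k hxb) (rdown_monotone k hax)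

namespace PMF

variable {α β : Type*}

lemma apply_eq_mul_add_mul_of_restrict (μ ν₁ ν₂ : PMF α) (P : α → Prop) [DecidablePred P]
    {p : ℝ≥0∞} (hp0 : p ≠ 0) (hp1 : p < 1)
    (hν₁ : ∀ a, ν₁ a = (if P a then μ a else 0) / p)
    (hν₂ : ∀ a, ν₂ a = (if ¬P a then μ a else 0) / (1 - p)) (a : α) :
    μ a = p * ν₁ a + (1 - p) * ν₂ a := by
  have hp_top : p ≠ ∞ := (hp1.trans ENNReal.one_lt_top).ne
  have hq0 : 1 - p ≠ 0 := (tsub_pos_of_lt hp1).ne'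
  have hq_top : 1 - p ≠ ∞ := ENNReal.sub_ne_top ENNReal.one_ne_top
  rw [hν₁, hν₂, ENNReal.mul_div_cancel hp0 hp_top, ENNReal.mul_div_cancel hq0 hq_top]
  split_ifs <;> simp

lemma tsum_ite_eq_mixture [DecidableEq β] {μ ν₁ ν₂ : PMF α} {p q : ℝ≥0∞}
    (h : ∀ a, μ a = p * ν₁ a + q * ν₂ a) (f : α → β) (b : β) :
    ∑' a, (if f a = b then μ a else 0) =
      p * ∑' a, (if f a = b then ν₁ a else 0) + q * ∑' a, (if f a = b then ν₂ a else 0) := by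
  rw [← ENNReal.tsum_mul_left, ← ENNReal.tsum_mul_left, ← ENNReal.tsum_add]
  refine tsum_congr fun a => ?_
  split_ifs <;> simp [h]

lemma tsum_ite_eq_of_eq_on_support [DecidableEq β] (ν : PMF α) {f : α → β} {c : β}
    (hf : ∀ a ∈ ν.support, f a = c) (b : β) :
    ∑' a, (if f a = b then ν a else 0) = if b = c then 1 else 0 := by
  split_ifs with hb
  · subst hb
    rw [← ν.tsum_coe]
    refine tsum_congr fun a => ?_
    by_cases ha : ν a = 0
    · simp [ha]
    · rw [if_pos (hf a ha)]
  · refine ENNReal.tsum_eq_zero.2 fun a => ?_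
    split_ifs with hfa
    · by_contra ha
      exact hb (hfa.symm.trans (hf a ha))
    · rfl

end PMF

theorem stmt19_general (d : ℕ) (m s : ℕ)
    (v : Fin d → ℤ)
    (L : PMF ℤ)
    (p : ℝ≥0∞)
    (hp0 : 0 < p) (hp1 : p < 1)
    (Lge : PMF ℤ)
    (hLge : ∀ η : ℤ, Lge η = (if (m : ℤ) ≤ |η| then L η else 0) / p)
    (Llt : PMF ℤ)
    (hLlt : ∀ η : ℤ, Llt η = (if |η| < (m : ℤ) then L η else 0) / (1 - p))
    (A B : PMF (Fin d → ℤ))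
    (hA : ∀ y : Fin d → ℤ, A y = (s : ℝ≥0∞)⁻¹ * ∑ j ∈ Finset.Icc 1 s, ∏ i,
      ∑' η : ℤ, if rdown (m * s) (v i + (j : ℤ) * (m : ℤ) + η) = y i then L η else 0)
    (hB : ∀ y : Fin d → ℤ, B y = (s : ℝ≥0∞)⁻¹ * ∑ j ∈ Finset.Icc 1 s, ∏ i,
      (p * ∑' η : ℤ,
          (if rdown (m * s) (v i + (j : ℤ) * (m : ℤ) + η) = y i then Lge η else 0) +
       (1 - p) *
        (if rdown (m * s) (v i + (j : ℤ) * (m : ℤ) - (m : ℤ)) =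
            rdown (m * s) (v i + (j : ℤ) * (m : ℤ) + (m : ℤ)) then
          (if y i = rdown (m * s) (v i + (j : ℤ) * (m : ℤ) - (m : ℤ)) then 1 else 0)
        else
          ∑' η : ℤ,
            (if rdown (m * s) (v i + (j : ℤ) * (m : ℤ) + η) = y i
             then Llt η else 0)))) :
    A = B := by
  have hmix : ∀ η, L η = p * Lge η + (1 - p) * Llt η :=
    PMF.apply_eq_mul_add_mul_of_restrict L Lge Llt (fun η => (m : ℤ) ≤ |η|) hp0.ne' hp1 hLge
      fun η => by simp only [hLlt η, not_le]
  have hLlt_support : ∀ η ∈ Llt.support, |η| < (m : ℤ) := fun η hη => by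
    by_contra h
    exact hη (by rw [hLlt η, if_neg h, ENNReal.zero_div])
  ext y
  rw [hA y, hB y]
  congr 1
  refine Finset.sum_congr rfl fun j _ => Finset.prod_congr rfl fun i _ => ?_
  rw [PMF.tsum_ite_eq_mixture hmix]
  congr 2
  by_cases hE : rdown (m * s) (v i + j * m - m) = rdown (m * s) (v i + j * m + m)
  · rw [if_pos hE]
    refine Llt.tsum_ite_eq_of_eq_on_support (fun η hη => ?_) (y i)
    obtain ⟨hlo, hhi⟩ := abs_lt.mp (hLlt_support η hη)
    exact rdown_eq_of_le_of_le hE (by omega) (by omega)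
  · rw [if_neg hE]

/-- With `L = Lap_ℤ(d/ε)` and `p = P_{Y ∼ L}[|Y| ≥ m] ∈ (0, 1)`, the distribution (A):
sample `ω` uniform on `{m, 2m, …, sm}` and `η₁, …, η_d` i.i.d. from `L`, output
`(⌊v_i + ω + η_i⌋_{ms})_i`, coincides with the distribution (B): include each index in
`J` independently with probability `p`, sample `ω` uniform on `{m, 2m, …, sm}`, and
for each `i` independently output `⌊v_i + ω + η_i⌋_{ms}` with `η_i ∼ L` conditioned on
`|η_i| ≥ m` if `i ∈ J`; output `⌊v_i + ω − m⌋_{ms}` if `i ∉ J` and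
`⌊v_i + ω − m⌋_{ms} = ⌊v_i + ω + m⌋_{ms}`; and otherwise output
`⌊v_i + ω + η_i⌋_{ms}` with `η_i ∼ L` conditioned on `|η_i| < m`. -/
theorem stmt19 (d : ℕ) (hd : 1 ≤ d) (ε : ℝ) (hε : 0 < ε) (m s : ℕ)
    (hm : 0 < m) (hs : 0 < s) (v : Fin d → ℤ)
    (L : PMF ℤ)
    (hL : ∀ x : ℤ, L x = ENNReal.ofReal
      ((Real.exp (1 / ((d : ℝ) / ε)) - 1) / (Real.exp (1 / ((d : ℝ) / ε)) + 1) *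
        Real.exp (-|(x : ℝ)| / ((d : ℝ) / ε))))
    (p : ℝ≥0∞) (hp : p = L.toOuterMeasure {z : ℤ | (m : ℤ) ≤ |z|})
    (hp0 : 0 < p) (hp1 : p < 1)
    (Lge : PMF ℤ)
    (hLge : ∀ η : ℤ, Lge η = (if (m : ℤ) ≤ |η| then L η else 0) / p)
    (Llt : PMF ℤ)
    (hLlt : ∀ η : ℤ, Llt η = (if |η| < (m : ℤ) then L η else 0) / (1 - p))
    (A B : PMF (Fin d → ℤ))
    (hA : ∀ y : Fin d → ℤ, A y = (s : ℝ≥0∞)⁻¹ * ∑ j ∈ Finset.Icc 1 s, ∏ i,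
      ∑' η : ℤ, if rdown (m * s) (v i + (j : ℤ) * (m : ℤ) + η) = y i then L η else 0)
    (hB : ∀ y : Fin d → ℤ, B y = (s : ℝ≥0∞)⁻¹ * ∑ j ∈ Finset.Icc 1 s, ∏ i,
      (p * ∑' η : ℤ,
          (if rdown (m * s) (v i + (j : ℤ) * (m : ℤ) + η) = y i then Lge η else 0) +
       (1 - p) *
        (if rdown (m * s) (v i + (j : ℤ) * (m : ℤ) - (m : ℤ)) =
            rdown (m * s) (v i + (j : ℤ) * (m : ℤ) + (m : ℤ)) then
          (if y i = rdown (m * s) (v i + (j : ℤ) * (m : ℤ) - (m : ℤ)) then 1 else 0)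
        else
          ∑' η : ℤ,
            (if rdown (m * s) (v i + (j : ℤ) * (m : ℤ) + η) = y i
             then Llt η else 0)))) :
    A = B :=
  stmt19_general d m s v L p hp0 hp1 Lge hLge Llt hLlt A B hA hB
end
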